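/- Let $S \subseteq \mathbb{R}^n$ be measurable with $S + 2\pi\mathbb{Z}^n = \mathbb{R}^n$ (covering property) and $S$ bounded. Then for every sequence $(c_k)_{k \in \mathbb{Z}^n} \in \ell^2(\mathbb{Z}^n)$, there exists $F \in L^2(S)$ whose Fourier coefficients against $\{(2\pi)^{-n/2}e^{ik\cdot x}\}$, i.e., $(2\pi)^{-n/2}\int_S F(x)e^{-ik\cdot x}\,dx$, equal $c_k$ for all $k$. -/

import Mathlib

/-!
In each orbit of `2πℤⁿ`, keep the point of `S` that comes first for the lexicographic order on
the lattice: as `S` is bounded, every orbit meets `S` in a finite nonempty set, so this selects a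
measurable fundamental domain `D ⊆ S`. Integrals of periodic functions over a fundamental domain
do not change when the domain is translated by an arbitrary vector `v`; since
`e_m(x + v) = e_m(v) e_m(x)` and `e_m(v) = -1` for a suitable `v` when `m ≠ 0`, this gives
`∫_D e_m = (2π)ⁿ δ_{m,0}`. So the normalised exponentials are orthonormal in `L²(D)`, the
Riesz–Fischer theorem yields `G ∈ L²(D)` with Fourier coefficients `c`, and `G` extended by zero
is the required `F`.
-/

open MeasureTheory Real Finset
open scoped Pointwise ComplexConjugate

section LeastRepresentatives

variable {G K α : Type*} [AddGroup G] [AddCommGroup K] [LinearOrder K] [AddAction G α]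

def leastRepresentatives (key : G →+ K) (S : Set α) : Set α :=
  {y ∈ S | ∀ g : G, g +ᵥ y ∈ S → 0 ≤ key g}

variable {key : G →+ K} {S : Set α}

theorem leastRepresentatives_subset : leastRepresentatives key S ⊆ S := fun _ hy => hy.1

theorem measurableSet_leastRepresentatives [Countable G] [MeasurableSpace α]
    [MeasurableConstVAdd G α] (hS : MeasurableSet S) :
    MeasurableSet (leastRepresentatives key S) := by
  have : leastRepresentatives key S = S ∩ ⋂ g : G, {y | g +ᵥ y ∈ S → 0 ≤ key g} := by
    ext y; simp [leastRepresentatives]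
  rw [this]
  refine hS.inter (.iInter fun g => ?_)
  by_cases hg : 0 ≤ key g
  · simp [hg]
  · simp only [hg, imp_false]
    exact measurable_const_vadd g hS.compl

theorem existsUnique_vadd_mem_leastRepresentatives [IsOrderedAddMonoid K]
    (hkey : Function.Injective key) (hfin : ∀ x : α, {g : G | g +ᵥ x ∈ S}.Finite)
    (hcov : ∀ x : α, ∃ g : G, g +ᵥ x ∈ S) (x : α) : ∃! g : G, g +ᵥ x ∈ leastRepresentatives key S := by
  obtain ⟨g₀, hg₀S, hg₀min⟩ := Set.exists_min_image _ key (hfin x) (hcov x)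
  refine ⟨g₀, ⟨hg₀S, fun g hg => ?_⟩, fun g₁ ⟨hg₁S, hg₁min⟩ => hkey (le_antisymm ?_ ?_)⟩
  · have := hg₀min (g + g₀) (by rwa [Set.mem_ofPred_eq, add_vadd])
    rwa [map_add, le_add_iff_nonneg_left] at this
  · have := hg₁min (g₀ - g₁) (by rwa [vadd_vadd, sub_add_cancel])
    rwa [map_sub, sub_nonneg] at this
  · exact hg₀min g₁ hg₁S

theorem isAddFundamentalDomain_leastRepresentatives [IsOrderedAddMonoid K] [Countable G]
    [MeasurableSpace α] [MeasurableConstVAdd G α] (μ : Measure α) (hkey : Function.Injective key)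
    (hS : MeasurableSet S) (hfin : ∀ x : α, {g : G | g +ᵥ x ∈ S}.Finite)
    (hcov : ∀ x : α, ∃ g : G, g +ᵥ x ∈ S) :
    IsAddFundamentalDomain G (leastRepresentatives key S) μ :=
  .mk' (measurableSet_leastRepresentatives hS).nullMeasurableSet
    (existsUnique_vadd_mem_leastRepresentatives hkey hfin hcov)

end LeastRepresentatives

theorem MeasureTheory.IsAddFundamentalDomain.setIntegral_add_left {α E : Type*} [AddCommGroup α]
    [MeasurableSpace α] [MeasurableAdd α] [NormedAddCommGroup E] [NormedSpace ℝ E]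
    {μ : Measure α} [μ.IsAddLeftInvariant] {L : AddSubgroup α} [Countable L] {D : Set α}
    (hD : IsAddFundamentalDomain L D μ) {f : α → E} (hf : ∀ (g : L) (x : α), f (g +ᵥ x) = f x)
    (v : α) : ∫ x in D, f (v + x) ∂μ = ∫ x in D, f x ∂μ := by
  calc ∫ x in D, f (v + x) ∂μ = ∫ y in v +ᵥ D, f y ∂μ := by
        have h := (measurePreserving_add_left μ v).setIntegral_preimage_emb
          (measurableEmbedding_addLeft v) f (v +ᵥ D)
        rwa [show (v + ·) ⁻¹' (v +ᵥ D) = D from by simp [← vadd_eq_add, Set.preimage_vadd]] at h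
    _ = ∫ x in D, f x ∂μ := (hD.vadd_of_comm v).setIntegral_eq hD hf

theorem Orthonormal.exists_forall_inner_eq {ι 𝕜 E : Type*} [RCLike 𝕜] [NormedAddCommGroup E]
    [InnerProductSpace 𝕜 E] [CompleteSpace E] {v : ι → E} (hv : Orthonormal 𝕜 v) {c : ι → 𝕜}
    (hc : Summable fun i => ‖c i‖ ^ 2) : ∃ x : E, ∀ i, inner 𝕜 (v i) x = c i := by
  classical
  have hs : Summable fun i => c i • v i := by
    simpa using (hv.orthogonalFamily.summable_iff_norm_sq_summable c).mpr hc
  refine ⟨∑' i, c i • v i, fun i => ?_⟩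
  have h := hs.hasSum.mapL (innerSL 𝕜 (v i))
  simp only [innerSL_apply_apply, inner_smul_right, orthonormal_iff_ite.mp hv i] at h
  simpa using h.unique (hasSum_single i fun j hj => by simp [Ne.symm hj])

section TwoPiLattice

variable {n : ℕ}

variable (n) in
noncomputable def twoPiBasis : Module.Basis (Fin n) ℝ (Fin n → ℝ) :=
  (Pi.basisFun ℝ (Fin n)).isUnitSMul fun _ => two_pi_pos.ne'.isUnit

variable (n) in
noncomputable abbrev twoPiLattice : AddSubgroup (Fin n → ℝ) :=
  (Submodule.span ℤ (Set.range (twoPiBasis n))).toAddSubgroup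

instance : Countable (twoPiLattice n) := inferInstanceAs (Countable (Submodule.span ℤ _))

theorem twoPiBasis_repr (x : Fin n → ℝ) (i : Fin n) :
    (twoPiBasis n).repr x i = x i / (2 * π) := by
  rw [twoPiBasis, Module.Basis.repr_isUnitSMul, Units.smul_def, Units.val_inv_eq_inv_val,
    IsUnit.unit_spec]
  simp [div_eq_inv_mul]

theorem mem_twoPiLattice_iff {v : Fin n → ℝ} :
    v ∈ twoPiLattice n ↔ ∃ m : Fin n → ℤ, (2 * π) • (fun i => (m i : ℝ)) = v := by
  rw [Submodule.mem_toAddSubgroup, Module.Basis.mem_span_iff_repr_mem]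
  simp only [twoPiBasis_repr, algebraMap_int_eq, eq_intCast, Set.mem_range]
  constructor
  · intro h
    choose m hm using h
    refine ⟨m, funext fun i => ?_⟩
    simp [hm, mul_div_cancel₀ _ two_pi_pos.ne']
  · rintro ⟨m, rfl⟩ i
    exact ⟨m i, by simp⟩

theorem MeasureTheory.IsAddFundamentalDomain.volume_eq_two_pi_pow {D : Set (Fin n → ℝ)}
    (hD : IsAddFundamentalDomain (twoPiLattice n) D) : volume D = .ofReal ((2 * π) ^ n) := by
  rw [hD.measure_eq (ZSpan.isAddFundamentalDomain' (twoPiBasis n) volume),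
    ZSpan.volume_fundamentalDomain]
  have : Matrix.of (twoPiBasis n) = Matrix.diagonal fun _ => 2 * π := by
    ext i j
    simp [twoPiBasis, Module.Basis.isUnitSMul_apply, Matrix.diagonal_apply, Pi.single_apply,
      eq_comm]
  rw [this, Matrix.det_diagonal, prod_const, card_univ, Fintype.card_fin,
    abs_of_pos (by positivity)]

noncomputable def fourierExp (m : Fin n → ℤ) (x : Fin n → ℝ) : ℂ :=
  Complex.exp (Complex.I * ∑ j, (m j : ℝ) * x j)

theorem fourierExp_zero (x : Fin n → ℝ) : fourierExp 0 x = 1 := by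
  simp [fourierExp]

theorem norm_fourierExp (m : Fin n → ℤ) (x : Fin n → ℝ) : ‖fourierExp m x‖ = 1 := by
  simp [fourierExp, Complex.norm_exp]

theorem continuous_fourierExp (m : Fin n → ℤ) : Continuous (fourierExp m) := by
  unfold fourierExp
  fun_prop

theorem conj_fourierExp (m : Fin n → ℤ) (x : Fin n → ℝ) :
    conj (fourierExp m x) = Complex.exp (-Complex.I * ∑ j, (m j : ℝ) * x j) := by
  rw [fourierExp, ← Complex.exp_conj, map_mul, Complex.conj_I, Complex.conj_ofReal]

theorem fourierExp_sub (k l : Fin n → ℤ) (x : Fin n → ℝ) :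
    fourierExp (l - k) x = conj (fourierExp k x) * fourierExp l x := by
  have h : ∑ j, ((l - k) j : ℝ) * x j = ∑ j, (l j : ℝ) * x j - ∑ j, (k j : ℝ) * x j := by
    simp [sub_mul, sum_sub_distrib]
  rw [conj_fourierExp, fourierExp, fourierExp, ← Complex.exp_add, h]
  congr 1
  push_cast
  ring

theorem fourierExp_apply_add (m : Fin n → ℤ) (x y : Fin n → ℝ) :
    fourierExp m (x + y) = fourierExp m x * fourierExp m y := by
  have h : ∑ j, (m j : ℝ) * (x + y) j = ∑ j, (m j : ℝ) * x j + ∑ j, (m j : ℝ) * y j := by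
    simp [mul_add, sum_add_distrib]
  rw [fourierExp, fourierExp, fourierExp, ← Complex.exp_add, h]
  congr 1
  push_cast
  ring

theorem fourierExp_of_mem_twoPiLattice (m : Fin n → ℤ) {v : Fin n → ℝ}
    (hv : v ∈ twoPiLattice n) : fourierExp m v = 1 := by
  obtain ⟨k, rfl⟩ := mem_twoPiLattice_iff.mp hv
  have h : ∑ j, (m j : ℝ) * ((2 * π) • fun i => (k i : ℝ)) j =
      (∑ j, m j * k j : ℤ) * (2 * π) := by
    push_cast
    simp only [Pi.smul_apply, smul_eq_mul, sum_mul]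
    exact sum_congr rfl fun j _ => by ring
  rw [fourierExp, h, ← Complex.exp_int_mul_two_pi_mul_I (∑ j, m j * k j)]
  congr 1
  push_cast
  ring

theorem fourierExp_single {m : Fin n → ℤ} {i : Fin n} (hm : m i ≠ 0) :
    fourierExp m (Pi.single i (π / m i)) = -1 := by
  have h : ∑ j, (m j : ℝ) * (Pi.single i (π / m i) : Fin n → ℝ) j = π := by
    rw [sum_eq_single i (fun j _ hj => by simp [hj]) (by simp), Pi.single_eq_same]
    field_simp
  rw [fourierExp, h, mul_comm, Complex.exp_pi_mul_I]

theorem exists_isAddFundamentalDomain_twoPiLattice_subset {S : Set (Fin n → ℝ)}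
    (hSm : MeasurableSet S) (hSb : Bornology.IsBounded S)
    (hcov : ∀ y : Fin n → ℝ, ∃ s ∈ S, ∃ m : Fin n → ℤ,
      y = s + (2 * π) • (fun i => (m i : ℝ))) :
    ∃ D ⊆ S, MeasurableSet D ∧ IsAddFundamentalDomain (twoPiLattice n) D := by
  let key : twoPiLattice n →+ Lex (Fin n → ℝ) :=
    (toLexAddEquiv _).toAddMonoidHom.comp (twoPiLattice n).subtype
  have hkey : Function.Injective key := toLex.injective.comp Subtype.val_injective
  have hfin (x : Fin n → ℝ) : {g : twoPiLattice n | g +ᵥ x ∈ S}.Finite :=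
    (ZSpan.setFinite_inter (twoPiBasis n)
      ((isometry_add_right x).antilipschitz.isBounded_preimage hSb)).preimage
      Subtype.val_injective.injOn |>.subset fun g hg => ⟨hg, g.2⟩
  have hcov' (x : Fin n → ℝ) : ∃ g : twoPiLattice n, g +ᵥ x ∈ S := by
    obtain ⟨s, hs, m, rfl⟩ := hcov x
    refine ⟨-⟨_, mem_twoPiLattice_iff.mpr ⟨m, rfl⟩⟩, ?_⟩
    convert hs using 1
    exact neg_add_cancel_comm_assoc (G := Fin n → ℝ) _ _
  exact ⟨leastRepresentatives key S, leastRepresentatives_subset,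
    measurableSet_leastRepresentatives hSm,
    isAddFundamentalDomain_leastRepresentatives volume hkey hSm hfin hcov'⟩

theorem MeasureTheory.IsAddFundamentalDomain.setIntegral_fourierExp {D : Set (Fin n → ℝ)}
    (hD : IsAddFundamentalDomain (twoPiLattice n) D) (m : Fin n → ℤ) :
    ∫ x in D, fourierExp m x = if m = 0 then (((2 * π) ^ n : ℝ) : ℂ) else 0 := by
  split_ifs with hm
  · simp [hm, fourierExp_zero, Measure.real, hD.volume_eq_two_pi_pow,
      ENNReal.toReal_ofReal (by positivity : (0 : ℝ) ≤ (2 * π) ^ n)]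
  · obtain ⟨i, hi⟩ : ∃ i, m i ≠ 0 := Function.ne_iff.mp hm
    have hper (g : twoPiLattice n) (x : Fin n → ℝ) : fourierExp m (g +ᵥ x) = fourierExp m x := by
      rw [AddSubgroup.vadd_def, vadd_eq_add, fourierExp_apply_add,
        fourierExp_of_mem_twoPiLattice m g.2, one_mul]
    have h := hD.setIntegral_add_left hper (Pi.single i (π / m i))
    simp only [fourierExp_apply_add, fourierExp_single hi, neg_one_mul, integral_neg] at h
    exact self_eq_neg.mp h.symm

section L2

variable {μ : Measure (Fin n → ℝ)} [IsFiniteMeasure μ]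

variable (μ) in
theorem memLp_fourierExp (m : Fin n → ℤ) : MemLp (fourierExp m) 2 μ :=
  .of_bound (continuous_fourierExp m).aestronglyMeasurable 1
    (ae_of_all _ fun x => (norm_fourierExp m x).le)

variable (μ) in
noncomputable def fourierExpLp (m : Fin n → ℤ) : Lp ℂ 2 μ :=
  (memLp_fourierExp μ m).toLp _

theorem inner_fourierExpLp (k : Fin n → ℤ) (F : Lp ℂ 2 μ) :
    inner ℂ (fourierExpLp μ k) F = ∫ x, conj (fourierExp k x) * F x ∂μ := by
  rw [L2.inner_def]
  refine integral_congr_ae ?_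
  filter_upwards [(memLp_fourierExp μ k).coeFn_toLp] with x hx
  rw [fourierExpLp, hx, RCLike.inner_apply, mul_comm]

theorem orthonormal_fourierExpLp
    (hμ : ∀ m, ∫ x, fourierExp m x ∂μ = if m = 0 then (((2 * π) ^ n : ℝ) : ℂ) else 0) :
    Orthonormal ℂ fun m => (((2 * π) ^ (-(n : ℝ) / 2) : ℝ) : ℂ) • fourierExpLp μ m := by
  have hnorm : (((2 * π) ^ (-(n : ℝ) / 2) : ℝ) : ℂ) ^ 2 * (((2 * π) ^ n : ℝ) : ℂ) = 1 := by
    rw [← Complex.ofReal_pow, ← Complex.ofReal_mul, ← Real.rpow_natCast, ← Real.rpow_natCast,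
      ← Real.rpow_mul two_pi_pos.le, ← Real.rpow_add two_pi_pos]
    norm_num
  rw [orthonormal_iff_ite]
  intro k l
  have h : ∫ x, conj (fourierExp k x) * fourierExpLp μ l x ∂μ = ∫ x, fourierExp (l - k) x ∂μ :=
    integral_congr_ae <| by
      filter_upwards [(memLp_fourierExp μ l).coeFn_toLp] with x hx
      rw [fourierExpLp, hx, fourierExp_sub]
  rw [inner_smul_left, inner_smul_right, inner_fourierExpLp, h, hμ, Complex.conj_ofReal]
  by_cases hkl : k = l
  · simp [hkl, ← hnorm]
    ring
  · simp [hkl, sub_eq_zero, Ne.symm hkl]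

end L2

end TwoPiLattice

/-- if the `2πℤⁿ`-translates of a bounded measurable `S` cover `ℝⁿ`,
then every `ℓ²` sequence `(c_k)` is the sequence of Fourier coefficients
`(2π)^{-n/2} ∫_S F(x) e^{-ik·x} dx` of some `F ∈ L²(S)`. -/
theorem covering_gives_interpolation (n : ℕ)
    (S : Set (Fin n → ℝ)) (hSm : MeasurableSet S) (hSb : Bornology.IsBounded S)
    (hcov : ∀ y : Fin n → ℝ, ∃ s ∈ S, ∃ m : Fin n → ℤ,
      y = s + (2 * π) • (fun i => (m i : ℝ))) :
    ∀ c : (Fin n → ℤ) → ℂ, Summable (fun k => ‖c k‖ ^ 2) →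
      ∃ F : (Fin n → ℝ) → ℂ, MemLp F 2 (volume.restrict S) ∧
        ∀ k : Fin n → ℤ,
          (((2 * π) ^ (-(n : ℝ) / 2) : ℝ) : ℂ) *
              (∫ x in S, F x * Complex.exp (-Complex.I * ∑ j, (k j : ℝ) * x j)) = c k := by
  intro c hc
  obtain ⟨D, hDS, hDm, hD⟩ := exists_isAddFundamentalDomain_twoPiLattice_subset hSm hSb hcov
  have : IsFiniteMeasure (volume.restrict D) := isFiniteMeasure_restrict.mpr <| by
    simp [hD.volume_eq_two_pi_pow]
  obtain ⟨G, hG⟩ :=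
    (orthonormal_fourierExpLp hD.setIntegral_fourierExp).exists_forall_inner_eq hc
  refine ⟨D.indicator G, ?_, fun k => ?_⟩
  · rw [memLp_indicator_iff_restrict hDm, Measure.restrict_restrict_of_subset hDS]
    exact Lp.memLp G
  · rw [← hG k, inner_smul_left, Complex.conj_ofReal, inner_fourierExpLp]
    have h (x : Fin n → ℝ) : D.indicator G x * Complex.exp (-Complex.I * ∑ j, (k j : ℝ) * x j) =
        D.indicator (fun x => conj (fourierExp k x) * G x) x := by
      rw [Set.indicator_mul_right, conj_fourierExp, mul_comm]
    simp_rw [h, setIntegral_indicator hDm, Set.inter_eq_right.mpr hDS]
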